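/- arXiv:2504.10814 — 8 statements merged into one kernel-verified Lean document; each statement's English description precedes it below -/
import Mathlib

section
/- Let m ≥ 1, z ∈ ℝ^m, β ∈ (0,1), and suppose k = (1-β)m is a positive integer. Then the infimum over α ∈ ℝ of α + (1/((1-β)m)) Σ_{i=1}^m max(z_i - α, 0) equals (1/k) f_k(z), i.e., the average of the k largest components of z, and this infimum is attained at α = z_[k], the k-th largest component of z. -/
/-- The vector `z` sorted in nonincreasing order: `sortDesc z i` is the `(i+1)`-th
largest component of `z`. -/
noncomputable def sortDesc {m : ℕ} (z : Fin m → ℝ) : Fin m → ℝ :=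
  fun i => z (Tuple.sort (fun j => -z j) i)

/-- `f_k(z)`: the sum of the `k` largest components of `z`. -/
noncomputable def sumLargest {m : ℕ} (k : ℕ) (z : Fin m → ℝ) : ℝ :=
  ∑ i : Fin m, if (i : ℕ) < k then sortDesc z i else 0

/-- `z_[k]`: the `k`-th largest component of `z` (1-indexed). -/
noncomputable def kthLargest {m : ℕ} (k : ℕ) (z : Fin m → ℝ) : ℝ :=
  if h : k - 1 < m then sortDesc z ⟨k - 1, h⟩ else 0

/-- Sample CVaR at level `β`. -/
noncomputable def cvar {m : ℕ} (β : ℝ) (z : Fin m → ℝ) : ℝ :=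
  ⨅ α : ℝ, α + (1 / ((1 - β) * m)) * ∑ i, max (z i - α) 0

lemma sortDesc_antitone {m : ℕ} (z : Fin m → ℝ) : Antitone (sortDesc z) := by
  intro i j hij
  have h := Tuple.monotone_sort (fun j => -z j) hij
  simp only [Function.comp_apply] at h
  simp only [sortDesc]
  linarith

lemma sum_max_perm {m : ℕ} (z : Fin m → ℝ) (α : ℝ) :
    ∑ i, max (sortDesc z i - α) 0 = ∑ i, max (z i - α) 0 := by
  exact Equiv.sum_comp (Tuple.sort (fun j => -z j)) (fun j => max (z j - α) 0)

lemma sum_ite_lt_const {m k : ℕ} (hk : k ≤ m) (c : ℝ) :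
    ∑ i : Fin m, (if (i : ℕ) < k then c else 0) = (k : ℝ) * c := by
  rw [Fin.sum_univ_eq_sum_range (fun i => if i < k then c else 0)]
  rw [← Finset.sum_filter]
  have hset : (Finset.range m).filter (fun i => i < k) = Finset.range k := by
    ext i; simp only [Finset.mem_filter, Finset.mem_range]; omega
  rw [hset, Finset.sum_const, Finset.card_range, nsmul_eq_mul]

/-- Lower bound: for every `α`, the RU objective is at least `(1/k) f_k(z)`. -/
lemma key_lower {m : ℕ} (z : Fin m → ℝ) (k : ℕ) (hk : 0 < k) (hkm : k ≤ m) (α : ℝ) :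
    (1 / (k : ℝ)) * sumLargest k z ≤ α + (1 / (k : ℝ)) * ∑ i, max (z i - α) 0 := by
  have hkR : (0 : ℝ) < k := by exact_mod_cast hk
  have hsum : sumLargest k z - (k : ℝ) * α ≤ ∑ i, max (z i - α) 0 := by
    rw [← sum_max_perm z α]
    have h1 : ∑ i : Fin m, (if (i : ℕ) < k then sortDesc z i - α else 0)
        ≤ ∑ i, max (sortDesc z i - α) 0 := by
      apply Finset.sum_le_sum
      intro i _
      by_cases h : (i : ℕ) < k
      · simp [h, le_max_left]
      · simp [h, le_max_right]
    have h2 : ∑ i : Fin m, (if (i : ℕ) < k then sortDesc z i - α else 0)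
        = sumLargest k z - (k : ℝ) * α := by
      have hterm : ∀ i : Fin m, (if (i : ℕ) < k then sortDesc z i - α else 0)
          = (if (i : ℕ) < k then sortDesc z i else 0) - (if (i : ℕ) < k then α else 0) := by
        intro i; split <;> simp
      rw [Finset.sum_congr rfl (fun i _ => hterm i), Finset.sum_sub_distrib,
        sum_ite_lt_const hkm, sumLargest]
    linarith
  have := mul_le_mul_of_nonneg_left hsum (le_of_lt (one_div_pos.mpr hkR))
  have hcancel : (1 / (k : ℝ)) * ((k : ℝ) * α) = α := by field_simp
  calc (1 / (k : ℝ)) * sumLargest k z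
      = α + (1 / (k : ℝ)) * (sumLargest k z - (k : ℝ) * α) := by
        rw [mul_sub, hcancel]; ring
    _ ≤ α + (1 / (k : ℝ)) * ∑ i, max (z i - α) 0 := by linarith

/-- Equality at `α = z_[k]`. -/
lemma key_eq {m : ℕ} (z : Fin m → ℝ) (k : ℕ) (hk : 0 < k) (hkm : k ≤ m) :
    ∑ i, max (z i - kthLargest k z) 0 = sumLargest k z - (k : ℝ) * kthLargest k z := by
  have hk1 : k - 1 < m := by omega
  set α := kthLargest k z with hα
  have hαval : α = sortDesc z ⟨k - 1, hk1⟩ := by rw [hα, kthLargest, dif_pos hk1]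
  rw [← sum_max_perm z α]
  have hterm : ∀ i : Fin m, max (sortDesc z i - α) 0
      = (if (i : ℕ) < k then sortDesc z i else 0) - (if (i : ℕ) < k then α else 0) := by
    intro i
    by_cases h : (i : ℕ) < k
    · have hle : (i : Fin m) ≤ ⟨k - 1, hk1⟩ := by
        rw [Fin.le_def]; simp; omega
      have : α ≤ sortDesc z i := by rw [hαval]; exact sortDesc_antitone z hle
      simp only [h, if_true]
      rw [max_eq_left (by linarith)]
    · have hge : (⟨k - 1, hk1⟩ : Fin m) ≤ i := by
        rw [Fin.le_def]; simp; omega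
      have : sortDesc z i ≤ α := by rw [hαval]; exact sortDesc_antitone z hge
      simp only [h, if_false]
      rw [max_eq_right (by linarith)]; ring
  rw [Finset.sum_congr rfl (fun i _ => hterm i), Finset.sum_sub_distrib,
    sum_ite_lt_const hkm, sumLargest]

/-- The infimum in the Rockafellar–Uryasev formula equals `(1/k) f_k(z)` and is
attained at `α = z_[k]`. -/
theorem cvar_eq_avg_of_k_largest (m : ℕ) (hm : 1 ≤ m) (z : Fin m → ℝ) (β : ℝ)
    (hβ0 : 0 < β) (hβ1 : β < 1) (k : ℕ) (hk : 0 < k) (hkβ : (k : ℝ) = (1 - β) * m) :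
    cvar β z = (1 / (k : ℝ)) * sumLargest k z ∧
      kthLargest k z + (1 / ((1 - β) * m)) * ∑ i, max (z i - kthLargest k z) 0
        = cvar β z := by
  have hmR : (1 : ℝ) ≤ m := by exact_mod_cast hm
  have hkltm : (k : ℝ) < m := by nlinarith
  have hkm : k ≤ m := by exact_mod_cast le_of_lt (by exact_mod_cast hkltm : (k : ℝ) < (m : ℝ))
  have hkR : (0 : ℝ) < k := by exact_mod_cast hk
  set c := (1 / (k : ℝ)) * sumLargest k z with hc
  have hlb : ∀ α : ℝ, c ≤ α + (1 / (k : ℝ)) * ∑ i, max (z i - α) 0 :=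
    fun α => key_lower z k hk hkm α
  set α₀ := kthLargest k z with hα₀
  have heq : α₀ + (1 / (k : ℝ)) * ∑ i, max (z i - α₀) 0 = c := by
    rw [key_eq z k hk hkm, hc]
    field_simp
    ring
  have hcvar : cvar β z = ⨅ α : ℝ, α + (1 / (k : ℝ)) * ∑ i, max (z i - α) 0 := by
    rw [cvar, ← hkβ]
  have hbdd : BddBelow (Set.range fun α : ℝ => α + (1 / (k : ℝ)) * ∑ i, max (z i - α) 0) := by
    refine ⟨c, ?_⟩
    rintro x ⟨α, rfl⟩
    exact hlb α
  have h1 : cvar β z ≤ c := by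
    rw [hcvar]
    exact le_of_le_of_eq (ciInf_le hbdd α₀) heq
  have h2 : c ≤ cvar β z := by
    rw [hcvar]
    exact le_ciInf hlb
  have hmain : cvar β z = c := le_antisymm h1 h2
  refine ⟨hmain, ?_⟩
  rw [← hkβ, heq, hmain]
end

section
/- Let m ≥ 1, z ∈ ℝ^m, β ∈ (0,1), κ ∈ ℝ, and suppose k = (1-β)m is a positive integer. Then φ_β(z) ≤ κ if and only if f_k(z) ≤ κ·k. -/
lemma sum_sortDesc {m : ℕ} (z : Fin m → ℝ) (g : ℝ → ℝ) :
    ∑ i : Fin m, g (sortDesc z i) = ∑ i : Fin m, g (z i) :=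
  Equiv.sum_comp (Tuple.sort (fun j => -z j)) (fun i => g (z i))

lemma card_filter_lt {m k : ℕ} (hkm : k ≤ m) :
    (Finset.univ.filter fun i : Fin m => (i : ℕ) < k).card = k := by
  have : (Finset.univ.filter fun i : Fin m => (i : ℕ) < k) =
      Finset.map (Fin.castLEEmb hkm) Finset.univ := by
    ext a
    simp only [Finset.mem_filter, Finset.mem_univ, true_and, Finset.mem_map,
      Fin.castLEEmb_apply]
    constructor
    · intro h; exact ⟨⟨a.1, h⟩, Fin.ext rfl⟩
    · rintro ⟨j, rfl⟩; simpa using j.isLt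
  simp [this]

/-- `φ_β(z) ≤ κ` iff `f_k(z) ≤ κ·k`, where `k = (1-β)m`. -/
theorem cvar_le_iff_sumLargest_le (m : ℕ) (hm : 1 ≤ m) (z : Fin m → ℝ) (β : ℝ)
    (hβ0 : 0 < β) (hβ1 : β < 1) (κ : ℝ) (k : ℕ) (hk : 0 < k)
    (hkβ : (k : ℝ) = (1 - β) * m) :
    cvar β z ≤ κ ↔ sumLargest k z ≤ κ * k := by
  have hk0 : (0:ℝ) < k := by exact_mod_cast hk
  have hm0 : (0:ℝ) ≤ m := Nat.cast_nonneg m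
  have hkm : k ≤ m := by
    have : (k:ℝ) ≤ m := by rw [hkβ]; nlinarith
    exact_mod_cast this
  set w := sortDesc z with hw
  have hanti : Antitone w := sortDesc_antitone z
  have hcard := card_filter_lt (m := m) (k := k) hkm
  have hsumL : sumLargest k z =
      ∑ i ∈ Finset.univ.filter (fun i : Fin m => (i : ℕ) < k), w i := by
    rw [sumLargest, Finset.sum_filter]
  -- key lower bound
  have key : ∀ α : ℝ, sumLargest k z ≤ k * α + ∑ i, max (z i - α) 0 := by
    intro α
    have h1 : ∑ i ∈ Finset.univ.filter (fun i : Fin m => (i : ℕ) < k), w i ≤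
        ∑ i ∈ Finset.univ.filter (fun i : Fin m => (i : ℕ) < k),
          (α + max (w i - α) 0) := by
      apply Finset.sum_le_sum
      intro i _
      have : w i - α ≤ max (w i - α) 0 := le_max_left _ _
      linarith
    have h2 : ∑ i ∈ Finset.univ.filter (fun i : Fin m => (i : ℕ) < k),
        (α + max (w i - α) 0) =
        k * α + ∑ i ∈ Finset.univ.filter (fun i : Fin m => (i : ℕ) < k),
          max (w i - α) 0 := by
      rw [Finset.sum_add_distrib, Finset.sum_const, hcard, nsmul_eq_mul]
    have h3 : ∑ i ∈ Finset.univ.filter (fun i : Fin m => (i : ℕ) < k),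
        max (w i - α) 0 ≤ ∑ i : Fin m, max (w i - α) 0 := by
      apply Finset.sum_le_sum_of_subset_of_nonneg (Finset.filter_subset _ _)
      intro i _ _; exact le_max_right _ _
    have h4 : ∑ i : Fin m, max (w i - α) 0 = ∑ i, max (z i - α) 0 :=
      sum_sortDesc z (fun t => max (t - α) 0)
    rw [hsumL]
    linarith
  -- the minimizing α
  have hk1m : k - 1 < m := lt_of_lt_of_le (Nat.pred_lt hk.ne') hkm
  set α₀ : ℝ := w ⟨k - 1, hk1m⟩ with hα₀
  have hval : ∑ i : Fin m, max (z i - α₀) 0 = sumLargest k z - k * α₀ := by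
    have h4 : ∑ i : Fin m, max (z i - α₀) 0 = ∑ i : Fin m, max (w i - α₀) 0 :=
      (sum_sortDesc z (fun t => max (t - α₀) 0)).symm
    have h5 : ∀ i : Fin m, max (w i - α₀) 0 =
        if (i : ℕ) < k then w i - α₀ else 0 := by
      intro i
      by_cases hi : (i : ℕ) < k
      · simp only [hi, if_true]
        have hle : i ≤ (⟨k - 1, hk1m⟩ : Fin m) := by
          have : (i : ℕ) ≤ k - 1 := Nat.le_pred_of_lt hi
          exact this
        have hge : α₀ ≤ w i := hanti hle
        rw [max_eq_left]; linarith
      · simp only [hi, if_false]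
        have hle : (⟨k - 1, hk1m⟩ : Fin m) ≤ i := by
          have : k - 1 ≤ (i : ℕ) := le_trans (Nat.pred_le k) (not_lt.mp hi)
          exact this
        have hge : w i ≤ α₀ := hanti hle
        rw [max_eq_right]; linarith
    rw [h4]
    simp_rw [h5]
    have h6 : ∑ i : Fin m, (if (i : ℕ) < k then w i - α₀ else 0) =
        (∑ i : Fin m, (if (i : ℕ) < k then w i else 0)) -
        (∑ i : Fin m, (if (i : ℕ) < k then α₀ else 0)) := by
      rw [← Finset.sum_sub_distrib]
      congr 1; ext i; by_cases hi : (i : ℕ) < k <;> simp [hi]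
    have h7 : ∑ i : Fin m, (if (i : ℕ) < k then α₀ else 0) = k * α₀ := by
      rw [← Finset.sum_filter, Finset.sum_const, hcard, nsmul_eq_mul]
    rw [h6, h7]
    rfl
  have hquot : α₀ + (1 / ((1 - β) * m)) * ∑ i, max (z i - α₀) 0 =
      sumLargest k z / k := by
    rw [← hkβ, hval]
    field_simp
    ring
  have hlow : ∀ α : ℝ, sumLargest k z / k ≤
      α + (1 / ((1 - β) * m)) * ∑ i, max (z i - α) 0 := by
    intro α
    rw [← hkβ, div_le_iff₀ hk0]
    have h := key α
    have heq : (α + 1 / (k:ℝ) * ∑ i, max (z i - α) 0) * k =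
        k * α + ∑ i, max (z i - α) 0 := by
      field_simp
    linarith [heq.ge, heq.le]
  have hbdd : BddBelow (Set.range fun α : ℝ =>
      α + (1 / ((1 - β) * m)) * ∑ i, max (z i - α) 0) := by
    refine ⟨sumLargest k z / k, ?_⟩
    rintro _ ⟨α, rfl⟩
    exact hlow α
  have hcvar : cvar β z = sumLargest k z / k := by
    apply le_antisymm
    · calc cvar β z ≤ α₀ + (1 / ((1 - β) * m)) * ∑ i, max (z i - α₀) 0 :=
          ciInf_le hbdd α₀
        _ = _ := hquot
    · exact le_ciInf hlow
  rw [hcvar, div_le_iff₀ hk0]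
end

section
/- Let m ≥ 1, z ∈ ℝ^m, β ∈ (0,1), κ ∈ ℝ, and suppose (1-β)m is a positive integer. Then φ_β(z) ≤ κ if and only if there exist α ∈ ℝ and y ∈ ℝ^m such that α + (1/((1-β)m)) Σ_{i=1}^m y_i ≤ κ, and for every i one has z_i - α ≤ y_i and 0 ≤ y_i. -/
open Finset

lemma card_filter_comp_perm {n : ℕ} (σ : Equiv.Perm (Fin n)) (p : Fin n → Prop)
    [DecidablePred p] :
    (univ.filter fun j => p (σ j)).card = (univ.filter p).card := by
  rw [← Fintype.card_subtype, ← Fintype.card_subtype]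
  exact Fintype.card_congr (σ.subtypeEquiv fun a => Iff.rfl)

/-- A CVaR constraint is equivalent to a system of linear inequalities. -/
theorem cvar_le_iff_linear_ineq (m : ℕ) (hm : 1 ≤ m) (z : Fin m → ℝ) (β : ℝ)
    (hβ0 : 0 < β) (hβ1 : β < 1) (κ : ℝ) (k : ℕ) (hk : 0 < k)
    (hkβ : (k : ℝ) = (1 - β) * m) :
    cvar β z ≤ κ ↔
      ∃ (α : ℝ) (y : Fin m → ℝ),
        α + (1 / ((1 - β) * m)) * ∑ i, y i ≤ κ ∧
        ∀ i, z i - α ≤ y i ∧ 0 ≤ y i := by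
  rw [cvar]
  have hk0 : (0 : ℝ) < k := by exact_mod_cast hk
  have hkm : k ≤ m := by
    have hmr : (0:ℝ) ≤ (m:ℝ) := Nat.cast_nonneg m
    have : (k : ℝ) ≤ m := by nlinarith
    exact_mod_cast this
  set c : ℝ := 1 / ((1 - β) * m) with hc
  have hck : c = 1 / k := by rw [hc, hkβ]
  have hc0 : 0 < c := by rw [hck]; positivity
  have hck1 : c * k = 1 := by rw [hck]; field_simp
  -- sorted index
  set σ := Tuple.sort z with hσ
  have hmono : Monotone (z ∘ σ) := Tuple.monotone_sort z
  have hidx : m - k < m := by omega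
  set idx : Fin m := ⟨m - k, hidx⟩ with hidxdef
  set q : ℝ := z (σ idx) with hq
  -- cardinality facts
  have cardA : ((univ.filter fun i => q < z i).card : ℝ) ≤ (k : ℝ) - 1 := by
    have h1 : (univ.filter fun j => (fun i => q < z i) (σ j)).card
        = (univ.filter fun i => q < z i).card :=
      card_filter_comp_perm σ (fun i => q < z i)
    have h2 : (univ.filter fun j => q < z (σ j)) ⊆ (univ.filter fun j => idx < j) := by
      intro j hj
      simp only [mem_filter, mem_univ, true_and] at hj ⊢
      by_contra hle
      push_neg at hle
      exact absurd (hmono hle) (not_le.mpr hj)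
    have h3 : (univ.filter fun j => idx < j) = Finset.Ioi idx := by
      ext j; simp [Finset.mem_Ioi]
    have h4 : (Finset.Ioi idx).card = k - 1 := by
      rw [Fin.card_Ioi]; simp [hidxdef]; omega
    have h5 : (univ.filter fun i => q < z i).card ≤ k - 1 := by
      rw [← h1]
      calc _ ≤ (univ.filter fun j => idx < j).card := Finset.card_le_card h2
        _ = k - 1 := by rw [h3, h4]
    have h6 : ((univ.filter fun i => q < z i).card : ℝ) ≤ ((k - 1 : ℕ) : ℝ) := by
      exact_mod_cast h5
    have h7 : ((k-1:ℕ):ℝ) = (k:ℝ) - 1 := by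
      rw [Nat.cast_sub (by omega : 1 ≤ k), Nat.cast_one]
    linarith
  have cardB : (k : ℝ) ≤ ((univ.filter fun i => q ≤ z i).card : ℝ) := by
    have h1 : (univ.filter fun j => (fun i => q ≤ z i) (σ j)).card
        = (univ.filter fun i => q ≤ z i).card :=
      card_filter_comp_perm σ (fun i => q ≤ z i)
    have h2 : (Finset.Ici idx) ⊆ (univ.filter fun j => q ≤ z (σ j)) := by
      intro j hj
      simp only [Finset.mem_Ici] at hj
      simp only [mem_filter, mem_univ, true_and]
      exact hmono hj
    have h4 : (Finset.Ici idx).card = k := by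
      rw [Fin.card_Ici]; simp [hidxdef]; omega
    have h5 : k ≤ (univ.filter fun i => q ≤ z i).card := by
      rw [← h1, ← h4]; exact Finset.card_le_card h2
    exact_mod_cast h5
  -- key: value at q is minimal
  have key : ∀ α : ℝ, q + c * ∑ i, max (z i - q) 0 ≤ α + c * ∑ i, max (z i - α) 0 := by
    intro α
    rcases le_total q α with hqa | hqa
    · have hsum : ∑ i, (max (z i - q) 0 - (α - q) * (if q < z i then (1:ℝ) else 0))
          ≤ ∑ i, max (z i - α) 0 := by
        apply Finset.sum_le_sum
        intro i _
        by_cases hi : q < z i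
        · simp only [hi, if_true]
          have h1 : max (z i - q) 0 = z i - q := max_eq_left (by linarith)
          have h2 : z i - α ≤ max (z i - α) 0 := le_max_left _ _
          linarith
        · simp only [hi, if_false]
          push_neg at hi
          have h1 : max (z i - q) 0 = 0 := max_eq_right (by linarith)
          have h2 : (0:ℝ) ≤ max (z i - α) 0 := le_max_right _ _
          linarith
      rw [Finset.sum_sub_distrib, ← Finset.mul_sum, Finset.sum_boole] at hsum
      set A : ℝ := ((univ.filter fun i => q < z i).card : ℝ) with hA
      have hcA : c * A ≤ 1 := by
        have := mul_le_mul_of_nonneg_left cardA hc0.le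
        nlinarith
      have h6 : (α - q) * (c * A) ≤ (α - q) * 1 :=
        mul_le_mul_of_nonneg_left hcA (by linarith)
      have h7 := mul_le_mul_of_nonneg_left hsum hc0.le
      nlinarith
    · have hsum : ∑ i, (max (z i - q) 0 + (q - α) * (if q ≤ z i then (1:ℝ) else 0))
          ≤ ∑ i, max (z i - α) 0 := by
        apply Finset.sum_le_sum
        intro i _
        by_cases hi : q ≤ z i
        · simp only [hi, if_true]
          have h1 : max (z i - q) 0 = z i - q := max_eq_left (by linarith)
          have h2 : z i - α ≤ max (z i - α) 0 := le_max_left _ _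
          linarith
        · simp only [hi, if_false]
          push_neg at hi
          have h1 : max (z i - q) 0 = 0 := max_eq_right (by linarith)
          have h2 : (0:ℝ) ≤ max (z i - α) 0 := le_max_right _ _
          linarith
      rw [Finset.sum_add_distrib, ← Finset.mul_sum, Finset.sum_boole] at hsum
      set B : ℝ := ((univ.filter fun i => q ≤ z i).card : ℝ) with hB
      have hcB : 1 ≤ c * B := by
        have := mul_le_mul_of_nonneg_left cardB hc0.le
        nlinarith
      have h6 : (q - α) * 1 ≤ (q - α) * (c * B) :=
        mul_le_mul_of_nonneg_left hcB (by linarith)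
      have h7 := mul_le_mul_of_nonneg_left hsum hc0.le
      nlinarith
  have hbdd : BddBelow (Set.range fun α : ℝ => α + c * ∑ i, max (z i - α) 0) :=
    ⟨q + c * ∑ i, max (z i - q) 0, by rintro x ⟨α, rfl⟩; exact key α⟩
  constructor
  · intro h
    refine ⟨q, fun i => max (z i - q) 0, ?_, fun i => ⟨le_max_left _ _, le_max_right _ _⟩⟩
    calc q + c * ∑ i, max (z i - q) 0
        ≤ ⨅ α : ℝ, α + c * ∑ i, max (z i - α) 0 := le_ciInf key
      _ ≤ κ := h
  · rintro ⟨α, y, hy, hiy⟩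
    calc (⨅ α : ℝ, α + c * ∑ i, max (z i - α) 0)
        ≤ α + c * ∑ i, max (z i - α) 0 := ciInf_le hbdd α
      _ ≤ α + c * ∑ i, y i := by
        have hs : ∑ i, max (z i - α) 0 ≤ ∑ i, y i :=
          Finset.sum_le_sum fun i _ => max_le (hiy i).1 (hiy i).2
        have := mul_le_mul_of_nonneg_left hs hc0.le
        linarith
      _ ≤ κ := hy
end

section
/- Let m ≥ 1 and 1 ≤ k ≤ m be integers, d ∈ ℝ, v ∈ ℝ^m, and let C = { z ∈ ℝ^m : f_k(z) ≤ d }. Let σ be a permutation of {1,…,m} such that v_{σ(1)} ≥ v_{σ(2)} ≥ ⋯ ≥ v_{σ(m)}, and let v' ∈ ℝ^m be the sorted vector with v'_i = v_{σ(i)}. If u* is the Euclidean projection of v' onto C, then the vector z* defined by z*_{σ(i)} = u*_i for all i is the Euclidean projection of v onto C. -/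
lemma sortDesc_comp_perm {m : ℕ} (z : Fin m → ℝ) (π : Equiv.Perm (Fin m)) :
    sortDesc (z ∘ π) = sortDesc z := by
  have h := Tuple.comp_perm_comp_sort_eq_comp_sort (f := fun j => -z j) (σ := π)
  have h' : (fun j => -(z ∘ π) j) = (fun j => -z j) ∘ π := rfl
  funext i
  have := congrFun h i
  simp only [Function.comp_apply] at this
  simp only [sortDesc, Function.comp_apply, h']
  exact neg_injective this

lemma sumLargest_comp_perm {m : ℕ} (k : ℕ) (z : Fin m → ℝ) (π : Equiv.Perm (Fin m)) :
    sumLargest k (z ∘ π) = sumLargest k z := by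
  unfold sumLargest
  rw [sortDesc_comp_perm]

/-- Sort-project-unsort: if `σ` sorts `v` into nonincreasing order `v' = v ∘ σ` and
`u` is the Euclidean projection of `v'` onto `C = {z : f_k(z) ≤ d}`, then the vector
`z*` with `z*_{σ(i)} = u_i` is the Euclidean projection of `v` onto `C`. -/
theorem sorted_projection (m k : ℕ) (hm : 1 ≤ m) (hk1 : 1 ≤ k) (hkm : k ≤ m)
    (d : ℝ) (v : Fin m → ℝ) (σ : Equiv.Perm (Fin m))
    (hσ : ∀ i j : Fin m, i ≤ j → v (σ j) ≤ v (σ i))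
    (u : Fin m → ℝ)
    (hproj : sumLargest k u ≤ d ∧
      ∀ w : Fin m → ℝ, sumLargest k w ≤ d →
        ∑ i, (v (σ i) - u i) ^ 2 ≤ ∑ i, (v (σ i) - w i) ^ 2) :
    sumLargest k (fun j => u (σ.symm j)) ≤ d ∧
      ∀ w : Fin m → ℝ, sumLargest k w ≤ d →
        ∑ i, (v i - u (σ.symm i)) ^ 2 ≤ ∑ i, (v i - w i) ^ 2 := by
  obtain ⟨h1, h2⟩ := hproj
  constructor
  · have : (fun j => u (σ.symm j)) = u ∘ σ.symm := rfl
    rw [this, sumLargest_comp_perm]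
    exact h1
  · intro w hw
    have hw' : sumLargest k (w ∘ σ) ≤ d := by rwa [sumLargest_comp_perm]
    have := h2 (w ∘ σ) hw'
    have e1 : ∑ i, (v i - u (σ.symm i)) ^ 2 = ∑ i, (v (σ i) - u i) ^ 2 := by
      rw [← Equiv.sum_comp σ (fun i => (v i - u (σ.symm i)) ^ 2)]
      simp
    have e2 : ∑ i, (v i - w i) ^ 2 = ∑ i, (v (σ i) - (w ∘ σ) i) ^ 2 := by
      rw [← Equiv.sum_comp σ (fun i => (v i - w i) ^ 2)]
      rfl
    rw [e1, e2]
    exact this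
end

section
/- Let m, k, n_u, n_t be integers with 0 ≤ n_u < k, k − n_u ≤ n_t, and n_u + n_t ≤ m. Then δ(n_u, n_t, k) = (1 / C(n_t − 1, k − n_u − 1)) · Σ_{δ ∈ ℐ(n_u, n_t, k)} δ, where C(·,·) denotes the binomial coefficient. -/
/-- The step direction `δ(n_u, n_t, k) ∈ ℝ^m`: first `n_u` entries equal
`n_t/(k − n_u)`, next `n_t` entries equal `1`, remaining entries equal `0`. -/
noncomputable def deltaVec (m nu nt k : ℕ) : Fin m → ℝ :=
  fun i =>
    if (i : ℕ) < nu then (nt : ℝ) / ((k : ℝ) - (nu : ℝ))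
    else if (i : ℕ) < nu + nt then 1 else 0

open Classical in
/-- `ℐ(n_u, n_t, k)`: the set of `k`-hot indicator vectors whose first `n_u`
entries equal `1` and whose `1`s all occur in the first `n_u + n_t` entries. -/
noncomputable def idxVecs (m nu nt k : ℕ) : Finset (Fin m → ℝ) :=
  ((Finset.univ : Finset (Finset (Fin m))).filter
      (fun S => S.card = k ∧ (∀ i : Fin m, (i : ℕ) < nu → i ∈ S) ∧
        (∀ i : Fin m, i ∈ S → (i : ℕ) < nu + nt))).image
    (fun S => fun i => if i ∈ S then (1 : ℝ) else 0)

/-! The members of `ℐ(n_u, n_t, k)` are the indicators of the sets `S` with `A ⊆ S ⊆ C` and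
`#S = k`, where `A` and `C` consist of the first `n_u` and `n_u + n_t` indices. Coordinate `i` of
their sum counts the `S` containing `i`: all `C(n_t, k - n_u)` of them for `i ∈ A`, the
`C(n_t - 1, k - n_u - 1)` sets between `insert i A` and `C` for `i ∈ C \ A`, and none for
`i ∉ C`. It remains to note that `C(n, r) / C(n - 1, r - 1) = n / r`. -/

open Finset

section IccFinset
variable {α : Type*} [DecidableEq α] {s t : Finset α}

theorem card_filter_card_eq_Icc_finset (h : s ⊆ t) {k : ℕ} (hk : #s ≤ k) :
    #{u ∈ Icc s t | #u = k} = (#t - #s).choose (k - #s) := by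
  obtain ⟨r, rfl⟩ := Nat.exists_eq_add_of_le hk
  have hdisj : ∀ v ∈ (t \ s).powerset, Disjoint s v := fun v hv =>
    disjoint_sdiff.mono_right (mem_powerset.1 hv)
  rw [Icc_eq_image_powerset h, filter_image,
    card_image_of_injOn fun v hv w hw hvw => by
      rw [← union_sdiff_cancel_left (hdisj v (mem_filter.1 hv).1),
        ← union_sdiff_cancel_left (hdisj w (mem_filter.1 hw).1)]
      exact congrArg (· \ s) hvw,
    ← card_sdiff_of_subset h, Nat.add_sub_cancel_left, ← card_powersetCard,
    powersetCard_eq_filter]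
  congr 1
  refine filter_congr fun v hv => ?_
  simp [card_union_of_disjoint (hdisj v hv)]

theorem filter_mem_Icc_finset (a : α) :
    {u ∈ Icc s t | a ∈ u} = Icc (insert a s) t := by
  ext u
  simp [insert_subset_iff, and_comm, and_assoc, and_left_comm]

theorem card_filter_card_eq_mem_Icc_finset_of_mem (h : s ⊆ t) {a : α} (ha : a ∈ s) {k : ℕ}
    (hk : #s ≤ k) : #{u ∈ Icc s t | #u = k ∧ a ∈ u} = (#t - #s).choose (k - #s) := by
  rw [filter_congr fun u hu => and_iff_left (mem_of_subset (mem_Icc.1 hu).1 ha),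
    card_filter_card_eq_Icc_finset h hk]

theorem card_filter_card_eq_mem_Icc_finset_of_mem_sdiff (h : s ⊆ t) {a : α} (ha : a ∈ t \ s)
    {k : ℕ} (hk : #s < k) :
    #{u ∈ Icc s t | #u = k ∧ a ∈ u} = (#t - #s - 1).choose (k - #s - 1) := by
  obtain ⟨hat, has⟩ := mem_sdiff.1 ha
  rw [← filter_filter, filter_comm, filter_mem_Icc_finset,
    card_filter_card_eq_Icc_finset (insert_subset hat h) (by rwa [card_insert_of_notMem has]),
    card_insert_of_notMem has, Nat.sub_add_eq, Nat.sub_add_eq]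

theorem card_filter_mem_Icc_finset_of_notMem {a : α} (ha : a ∉ t) (p : Finset α → Prop)
    [DecidablePred p] : #{u ∈ Icc s t | p u ∧ a ∈ u} = 0 := by
  rw [card_eq_zero, filter_eq_empty_iff]
  exact fun u hu hau => ha (mem_of_subset (mem_Icc.1 hu).2 hau.2)

end IccFinset

theorem sum_image_indicator_apply {α R : Type*} [DecidableEq α] [AddCommMonoidWithOne R]
    [NeZero (1 : R)] [DecidableEq (α → R)]
    (F : Finset (Finset α)) (i : α) :
    (∑ v ∈ F.image (fun S j => if j ∈ S then (1 : R) else 0), v) i = #{S ∈ F | i ∈ S} := by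
  rw [sum_image fun S _ T _ hST => ?_, Finset.sum_apply, sum_boole]
  ext j
  have hj := congrFun hST j
  split_ifs at hj <;> simp_all

theorem Nat.cast_choose_div_choose_sub_one {K : Type*} [Field K] [CharZero K] {n r : ℕ}
    (hr : 0 < r) (h : r ≤ n) : (n.choose r : K) / (n - 1).choose (r - 1) = n / r := by
  obtain ⟨r, rfl⟩ : ∃ r', r = r' + 1 := ⟨r - 1, by omega⟩
  obtain ⟨n, rfl⟩ : ∃ n', n = n' + 1 := ⟨n - 1, by omega⟩
  rw [Nat.add_sub_cancel, Nat.add_sub_cancel, div_eq_div_iff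
    (Nat.cast_ne_zero.2 (Nat.choose_pos (by omega)).ne') (Nat.cast_ne_zero.2 r.succ_ne_zero)]
  exact_mod_cast (Nat.add_one_mul_choose_eq n r).symm

def initialFinset (m n : ℕ) : Finset (Fin m) := {i | (i : ℕ) < n}

@[simp]
theorem mem_initialFinset {m n : ℕ} {i : Fin m} : i ∈ initialFinset m n ↔ (i : ℕ) < n :=
  mem_filter_univ i

theorem card_initialFinset {m n : ℕ} (h : n ≤ m) : #(initialFinset m n) = n := by
  rw [initialFinset, Fin.card_filter_val_lt, min_eq_right h]

theorem initialFinset_subset_initialFinset {m n n' : ℕ} (h : n ≤ n') :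
    initialFinset m n ⊆ initialFinset m n' := fun i hi => by
  simp only [mem_initialFinset] at hi ⊢
  omega

open Classical in
theorem idxVecs_eq_image_Icc (m nu nt k : ℕ) :
    idxVecs m nu nt k = ({S ∈ Icc (initialFinset m nu) (initialFinset m (nu + nt)) | #S = k}).image
      (fun S i => if i ∈ S then (1 : ℝ) else 0) := by
  unfold idxVecs
  congr 1
  ext S
  simp only [mem_filter, mem_univ, true_and, mem_Icc, subset_iff, mem_initialFinset]
  tauto

/-- `δ(n_u,n_t,k)` is the average `(1 / C(n_t−1, k−n_u−1)) Σ_{δ ∈ ℐ(n_u,n_t,k)} δ`. -/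
theorem deltaVec_eq_avg_idxVecs (m nu nt k : ℕ) (h1 : nu < k) (h2 : k - nu ≤ nt)
    (h3 : nu + nt ≤ m) :
    deltaVec m nu nt k
      = (1 / ((nt - 1).choose (k - nu - 1) : ℝ)) • ∑ a ∈ idxVecs m nu nt k, a := by
  have hA := card_initialFinset (m := m) (by omega : nu ≤ m)
  have hC := card_initialFinset h3
  have hAC := initialFinset_subset_initialFinset (m := m) (Nat.le_add_right nu nt)
  funext i
  rw [idxVecs_eq_image_Icc, Pi.smul_apply, sum_image_indicator_apply, smul_eq_mul, filter_filter]
  by_cases hiA : (i : ℕ) < nu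
  · rw [card_filter_card_eq_mem_Icc_finset_of_mem hAC (mem_initialFinset.2 hiA)
      (hA.trans_le h1.le), hA, hC, Nat.add_sub_cancel_left, one_div_mul_eq_div,
      Nat.cast_choose_div_choose_sub_one (by omega) h2, Nat.cast_sub h1.le, deltaVec, if_pos hiA]
  by_cases hiC : (i : ℕ) < nu + nt
  · rw [card_filter_card_eq_mem_Icc_finset_of_mem_sdiff hAC
      (mem_sdiff.2 ⟨mem_initialFinset.2 hiC, mt mem_initialFinset.1 hiA⟩) (hA.trans_lt h1),
      hA, hC, Nat.add_sub_cancel_left, deltaVec, if_neg hiA, if_pos hiC, one_div_mul_cancel]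
    exact Nat.cast_ne_zero.2 (Nat.choose_pos (by omega)).ne'
  · rw [card_filter_mem_Icc_finset_of_notMem (mt mem_initialFinset.1 hiC), deltaVec,
      if_neg hiA, if_neg hiC, Nat.cast_zero, mul_zero]
end

section
/- Let m ≥ 1, τ ∈ (0,1), and suppose (1−τ)m is a positive integer. Let U ∈ ℝ^{m×n} with rows u_iᵀ, y ∈ ℝ^m, x ∈ ℝ^n, ū = (1/m) Σ_{i=1}^m u_i, and ȳ = (1/m) Σ_{i=1}^m y_i. Then inf_{x₀ ∈ ℝ} (1/m) Σ_{i=1}^m ρ_τ(y_i − u_iᵀx − x₀) = (1−τ)·( xᵀū − ȳ + φ_τ(y − Ux) ). -/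
/-- The tilted `ℓ₁` penalty `ρ_τ(z) = τ·max(z,0) + (1−τ)·max(−z,0)`. -/
def tiltedL1 (τ z : ℝ) : ℝ := τ * max z 0 + (1 - τ) * max (-z) 0

open Finset

noncomputable def cvarObjective {m : ℕ} (β : ℝ) (z : Fin m → ℝ) (α : ℝ) : ℝ :=
  α + (1 / ((1 - β) * m)) * ∑ i, max (z i - α) 0

lemma cvar_eq_iInf_cvarObjective {m : ℕ} (β : ℝ) (z : Fin m → ℝ) :
    cvar β z = ⨅ α, cvarObjective β z α :=
  rfl

lemma tiltedL1_eq (τ w : ℝ) : tiltedL1 τ w = max w 0 - (1 - τ) * w := by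
  have hneg : max (-w) 0 = max w 0 - w := by
    rcases le_total w 0 with h | h <;> simp [h]
  rw [tiltedL1, hneg]
  ring

lemma tiltedL1_nonneg {τ : ℝ} (hτ0 : 0 ≤ τ) (hτ1 : τ ≤ 1) (w : ℝ) : 0 ≤ tiltedL1 τ w := by
  unfold tiltedL1
  have : 0 ≤ 1 - τ := by linarith
  positivity

lemma mean_tiltedL1_sub_eq {m : ℕ} (hm : 0 < m) {τ : ℝ} (hτ1 : τ < 1) (z : Fin m → ℝ)
    (α : ℝ) :
    (1 / (m : ℝ)) * ∑ i, tiltedL1 τ (z i - α)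
      = (1 - τ) * (cvarObjective τ z α - (1 / (m : ℝ)) * ∑ i, z i) := by
  have hm0 : (m : ℝ) ≠ 0 := by positivity
  have hτ : 1 - τ ≠ 0 := by linarith
  simp only [tiltedL1_eq, cvarObjective, sum_sub_distrib, ← mul_sum, sum_const, card_univ,
    Fintype.card_fin, nsmul_eq_mul]
  field_simp
  ring

lemma mean_le_cvarObjective {m : ℕ} (hm : 0 < m) {τ : ℝ} (hτ0 : 0 ≤ τ) (hτ1 : τ < 1)
    (z : Fin m → ℝ) (α : ℝ) :
    (1 / (m : ℝ)) * ∑ i, z i ≤ cvarObjective τ z α := by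
  have hloss : 0 ≤ (1 - τ) * (cvarObjective τ z α - (1 / (m : ℝ)) * ∑ i, z i) := by
    rw [← mean_tiltedL1_sub_eq hm hτ1]
    exact mul_nonneg (by positivity) (sum_nonneg fun i _ => tiltedL1_nonneg hτ0 hτ1.le _)
  have := nonneg_of_mul_nonneg_right hloss (by linarith)
  linarith

lemma mul_sum_sub_sum_mul {ι κ : Type*} [Fintype ι] [Fintype κ] (c : ℝ) (y : ι → ℝ)
    (U : Matrix ι κ ℝ) (x : κ → ℝ) :
    c * ∑ i, (y i - ∑ j, U i j * x j) = c * ∑ i, y i - ∑ j, x j * (c * ∑ i, U i j) := by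
  simp only [sum_sub_distrib, mul_sub, mul_sum]
  rw [sum_comm]
  simp only [mul_left_comm, mul_comm]

theorem quantile_regression_cvar_general (m n : ℕ) (hm : 1 ≤ m) (τ : ℝ) (hτ0 : 0 < τ)
    (hτ1 : τ < 1) (U : Matrix (Fin m) (Fin n) ℝ) (y : Fin m → ℝ) (x : Fin n → ℝ) :
    (⨅ x₀ : ℝ, (1 / (m : ℝ)) * ∑ i, tiltedL1 τ (y i - (∑ j, U i j * x j) - x₀))
      = (1 - τ) *
        ((∑ j, x j * ((1 / (m : ℝ)) * ∑ i, U i j)) - (1 / (m : ℝ)) * ∑ i, y i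
          + cvar τ (fun i => y i - ∑ j, U i j * x j)) := by
  set z : Fin m → ℝ := fun i => y i - ∑ j, U i j * x j
  have hbdd : BddBelow (Set.range (cvarObjective τ z)) :=
    ⟨_, Set.forall_mem_range.2 (mean_le_cvarObjective hm hτ0.le hτ1 z)⟩
  calc (⨅ x₀ : ℝ, (1 / (m : ℝ)) * ∑ i, tiltedL1 τ (z i - x₀))
      = ⨅ α, (1 - τ) * (cvarObjective τ z α - (1 / (m : ℝ)) * ∑ i, z i) := by
        simp only [mean_tiltedL1_sub_eq hm hτ1]
    _ = (1 - τ) * (cvar τ z - (1 / (m : ℝ)) * ∑ i, z i) := by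
        rw [cvar_eq_iInf_cvarObjective, ciInf_sub hbdd, Real.mul_iInf_of_nonneg (by linarith)]
    _ = _ := by
        rw [mul_sum_sub_sum_mul (1 / (m : ℝ)) y U x]
        ring

/-- Minimizing the quantile-regression objective over the intercept `x₀` yields
`(1−τ)·(xᵀū − ȳ + φ_τ(y − Ux))`. -/
theorem quantile_regression_cvar (m n : ℕ) (hm : 1 ≤ m) (τ : ℝ) (hτ0 : 0 < τ)
    (hτ1 : τ < 1) (k : ℕ) (hk : 0 < k) (hkτ : (k : ℝ) = (1 - τ) * m)
    (U : Matrix (Fin m) (Fin n) ℝ) (y : Fin m → ℝ) (x : Fin n → ℝ) :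
    (⨅ x₀ : ℝ, (1 / (m : ℝ)) * ∑ i, tiltedL1 τ (y i - (∑ j, U i j * x j) - x₀))
      = (1 - τ) *
        ((∑ j, x j * ((1 / (m : ℝ)) * ∑ i, U i j)) - (1 / (m : ℝ)) * ∑ i, y i
          + cvar τ (fun i => y i - ∑ j, U i j * x j)) :=
  quantile_regression_cvar_general m n hm τ hτ0 hτ1 U y x
end

section
/- Let m, k, n_u, n_t be integers with 0 ≤ n_u < k, k − n_u ≤ n_t, n_t ≥ 1, and n_u + n_t ≤ m. Let z ∈ ℝ^m be sorted nonincreasing (z_1 ≥ z_2 ≥ ⋯ ≥ z_m) with z_{n_u+1} = z_{n_u+2} = ⋯ = z_{n_u+n_t}. Let s ≥ 0 satisfy: (i) if n_u ≥ 1, then z_{n_u} − s·n_t/(k − n_u) ≥ z_{n_u+1} − s; and (ii) if n_u + n_t < m, then z_{n_u+n_t} − s ≥ z_{n_u+n_t+1}. Then the vector z − s·δ(n_u, n_t, k) is sorted nonincreasing. -/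
/-- If `z` is sorted nonincreasing with equal entries in the tied block, and the
step size `s ≥ 0` respects the two boundary conditions, then `z − s·δ(n_u,n_t,k)`
is still sorted nonincreasing. -/
theorem decrease_step_preserves_sorted (m k nu nt : ℕ) (h1 : nu < k)
    (h2 : k - nu ≤ nt) (h3 : 1 ≤ nt) (h4 : nu + nt ≤ m)
    (z : Fin m → ℝ)
    (hsort : ∀ i j : Fin m, i ≤ j → z j ≤ z i)
    (htie : ∀ i j : Fin m, nu ≤ (i : ℕ) → (i : ℕ) < nu + nt →
      nu ≤ (j : ℕ) → (j : ℕ) < nu + nt → z i = z j)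
    (s : ℝ) (hs : 0 ≤ s)
    (hb1 : ∀ _ : 1 ≤ nu,
      z ⟨nu, by omega⟩ - s ≤ z ⟨nu - 1, by omega⟩ - s * ((nt : ℝ) / ((k : ℝ) - nu)))
    (hb2 : ∀ h : nu + nt < m,
      z ⟨nu + nt, h⟩ ≤ z ⟨nu + nt - 1, by omega⟩ - s) :
    ∀ i j : Fin m, i ≤ j →
      z j - s * deltaVec m nu nt k j ≤ z i - s * deltaVec m nu nt k i := by
  have hd0 : ∀ (a : ℕ) (h : a < m), a < nu →
      deltaVec m nu nt k ⟨a, h⟩ = (nt : ℝ) / ((k : ℝ) - nu) := by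
    intro a h ha; simp only [deltaVec]; rw [if_pos ha]
  have hd1 : ∀ (a : ℕ) (h : a < m), nu ≤ a → a < nu + nt →
      deltaVec m nu nt k ⟨a, h⟩ = 1 := by
    intro a h ha hb; simp only [deltaVec]; rw [if_neg (by omega), if_pos hb]
  have hd2 : ∀ (a : ℕ) (h : a < m), nu + nt ≤ a →
      deltaVec m nu nt k ⟨a, h⟩ = 0 := by
    intro a h ha; simp only [deltaVec]; rw [if_neg (by omega), if_neg (by omega)]
  have key : ∀ (a : ℕ) (h : a + 1 < m),
      z ⟨a + 1, h⟩ - s * deltaVec m nu nt k ⟨a + 1, h⟩ ≤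
      z ⟨a, by omega⟩ - s * deltaVec m nu nt k ⟨a, by omega⟩ := by
    intro a h
    have hz : z ⟨a + 1, h⟩ ≤ z ⟨a, by omega⟩ := by
      apply hsort; exact Fin.mk_le_mk.mpr (by omega)
    rcases lt_or_ge (a + 1) nu with hcase | hcase
    · rw [hd0 _ _ hcase, hd0 _ _ (by omega)]; linarith
    rcases eq_or_lt_of_le hcase with hcase2 | hcase2
    · -- a + 1 = nu
      rw [hd0 a _ (by omega), hd1 (a + 1) _ (by omega) (by omega)]
      have e1 : (⟨a + 1, h⟩ : Fin m) = ⟨nu, by omega⟩ := Fin.ext (by simp; omega)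
      have e2 : (⟨a, by omega⟩ : Fin m) = ⟨nu - 1, by omega⟩ := Fin.ext (by simp; omega)
      rw [e1, e2, mul_one]
      exact hb1 (by omega)
    rcases lt_or_ge (a + 1) (nu + nt) with hcase3 | hcase3
    · rw [hd1 (a + 1) _ (by omega) hcase3, hd1 a _ (by omega) (by omega)]; linarith
    rcases eq_or_lt_of_le hcase3 with hcase4 | hcase4
    · -- a + 1 = nu + nt
      rw [hd2 (a + 1) _ (by omega), hd1 a _ (by omega) (by omega), mul_one, mul_zero]
      have e1 : (⟨a + 1, h⟩ : Fin m) = ⟨nu + nt, by omega⟩ := Fin.ext (by simp; omega)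
      have e2 : (⟨a, by omega⟩ : Fin m) = ⟨nu + nt - 1, by omega⟩ := Fin.ext (by simp; omega)
      rw [e1, e2, sub_zero]
      exact hb2 (by omega)
    · rw [hd2 (a + 1) _ (by omega), hd2 a _ (by omega)]; linarith
  intro i j hij
  obtain ⟨d, hd⟩ : ∃ d, (j : ℕ) = (i : ℕ) + d := ⟨(j : ℕ) - (i : ℕ), by
    have := Fin.le_def.mp hij; omega⟩
  clear hij
  induction d generalizing j with
  | zero =>
    have : j = i := Fin.ext (by omega)
    rw [this]
  | succ d ih =>
    have hjm : (i : ℕ) + d + 1 < m := by omega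
    have e : j = ⟨(i : ℕ) + d + 1, hjm⟩ := Fin.ext (by simp; omega)
    calc z j - s * deltaVec m nu nt k j
        ≤ z ⟨(i : ℕ) + d, by omega⟩ - s * deltaVec m nu nt k ⟨(i : ℕ) + d, by omega⟩ := by
          subst e; exact key ((i : ℕ) + d) hjm
      _ ≤ z i - s * deltaVec m nu nt k i := ih ⟨(i : ℕ) + d, by omega⟩ rfl
end

section
/- Let m, k, n_u, n_t be integers with 0 ≤ n_u < k, k ≤ n_u + n_t ≤ m. Let z ∈ ℝ^m be sorted nonincreasing with z_{n_u+1} = ⋯ = z_{n_u+n_t}, and let s ≥ 0 be such that z − s·δ(n_u, n_t, k) is also sorted nonincreasing. Then f_k(z − s·δ(n_u, n_t, k)) = f_k(z) − s·( n_u·n_t/(k − n_u) + (k − n_u) ). -/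
lemma sortDesc_of_antitone {m : ℕ} (z : Fin m → ℝ)
    (h : ∀ i j : Fin m, i ≤ j → z j ≤ z i) : sortDesc z = z := by
  have hm : Monotone (fun j => -z j) := fun i j hij => neg_le_neg (h i j hij)
  have := (Tuple.comp_sort_eq_comp_iff_monotone (f := fun j => -z j)
    (σ := Equiv.refl (Fin m))).mpr (by simpa using hm)
  funext i
  have := congrFun this.symm i
  simp only [Function.comp, Equiv.refl_apply, neg_inj] at this
  simpa [sortDesc] using this

lemma sumLargest_of_antitone {m : ℕ} (k : ℕ) (z : Fin m → ℝ)
    (h : ∀ i j : Fin m, i ≤ j → z j ≤ z i) :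
    sumLargest k z = ∑ i : Fin m, if (i : ℕ) < k then z i else 0 := by
  unfold sumLargest
  rw [sortDesc_of_antitone z h]

/-- A decrease step reduces the sum of the `k` largest entries by exactly
`s·(n_u·n_t/(k−n_u) + (k−n_u))`. -/
theorem decrease_step_sumLargest (m k nu nt : ℕ) (h1 : nu < k)
    (h2 : k ≤ nu + nt) (h3 : nu + nt ≤ m)
    (z : Fin m → ℝ)
    (hsort : ∀ i j : Fin m, i ≤ j → z j ≤ z i)
    (htie : ∀ i j : Fin m, nu ≤ (i : ℕ) → (i : ℕ) < nu + nt →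
      nu ≤ (j : ℕ) → (j : ℕ) < nu + nt → z i = z j)
    (s : ℝ) (hs : 0 ≤ s)
    (hsort' : ∀ i j : Fin m, i ≤ j →
      z j - s * deltaVec m nu nt k j ≤ z i - s * deltaVec m nu nt k i) :
    sumLargest k (fun i => z i - s * deltaVec m nu nt k i)
      = sumLargest k z
        - s * ((nu : ℝ) * nt / ((k : ℝ) - nu) + ((k : ℝ) - nu)) := by
  have hkm : k ≤ m := le_trans h2 h3
  rw [sumLargest_of_antitone k _ hsort', sumLargest_of_antitone k z hsort]
  set c : ℝ := (nt : ℝ) / ((k : ℝ) - (nu : ℝ)) with hc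
  have key : ∑ i : Fin m, (if (i : ℕ) < k then deltaVec m nu nt k i else 0)
      = (nu : ℝ) * nt / ((k : ℝ) - nu) + ((k : ℝ) - nu) := by
    have hrw : ∑ i : Fin m, (if (i : ℕ) < k then deltaVec m nu nt k i else 0)
        = ∑ n ∈ Finset.range m,
            (if n < k then (if n < nu then c else if n < nu + nt then 1 else 0) else 0) := by
      rw [← Fin.sum_univ_eq_sum_range]
      rfl
    have hfil : (Finset.range m).filter (fun n => n < k) = Finset.range k := by
      ext n; simp only [Finset.mem_filter, Finset.mem_range]; omega
    rw [hrw, ← Finset.sum_filter, hfil, Finset.range_eq_Ico,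
      ← Finset.sum_Ico_consecutive _ (Nat.zero_le nu) h1.le]
    have e1 : ∑ n ∈ Finset.Ico 0 nu, (if n < nu then c else if n < nu + nt then (1:ℝ) else 0)
        = (nu : ℝ) * c := by
      rw [Finset.sum_congr rfl (fun n hn => by
        simp only [Finset.mem_Ico] at hn; rw [if_pos hn.2])]
      simp [mul_comm]
    have e2 : ∑ n ∈ Finset.Ico nu k, (if n < nu then c else if n < nu + nt then (1:ℝ) else 0)
        = (k : ℝ) - (nu : ℝ) := by
      rw [Finset.sum_congr rfl (fun n hn => by
        simp only [Finset.mem_Ico] at hn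
        rw [if_neg (by omega), if_pos (by omega)])]
      simp only [Finset.sum_const, Nat.card_Ico, nsmul_eq_mul, mul_one]
      push_cast [Nat.cast_sub h1.le]
      ring
    rw [e1, e2, hc]
    ring
  have hsplit : ∀ i : Fin m,
      (if (i : ℕ) < k then z i - s * deltaVec m nu nt k i else 0)
        = (if (i : ℕ) < k then z i else 0) - s * (if (i : ℕ) < k then deltaVec m nu nt k i else 0) := by
    intro i; split_ifs <;> simp
  rw [Finset.sum_congr rfl (fun i _ => hsplit i), Finset.sum_sub_distrib, ← Finset.mul_sum, key]
end
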